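/- arXiv:1210.0864 — 6 statements merged into one kernel-verified Lean document; each statement's English description precedes it below -/
import Mathlib

section
/- Let p be a probability distribution over [n], let I = {I_1,...,I_t} be a partition of [n] into intervals such that d_TV(p, p^flat(I)) ≤ ε, and let J = {J_1,...,J_{t'}} be a refinement of I (each interval of I is a union of intervals of J). Then d_TV(p, p^flat(J)) ≤ 2ε. -/
open Finset

def IsIntervalPartition (n : ℕ) (P : Finset (Finset ℕ)) : Prop :=
  (∀ I ∈ P, ∃ a b, 1 ≤ a ∧ a ≤ b ∧ b ≤ n ∧ I = Finset.Icc a b) ∧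
  (∀ I ∈ P, ∀ J ∈ P, I ≠ J → Disjoint I J) ∧
  P.biUnion id = Finset.Icc 1 n

noncomputable def flatten (p : ℕ → ℝ) (P : Finset (Finset ℕ)) (i : ℕ) : ℝ :=
  ∑ I ∈ P, if i ∈ I then (∑ j ∈ I, p j) / I.card else 0

noncomputable def dTV (n : ℕ) (p q : ℕ → ℝ) : ℝ :=
  (1/2) * ∑ i ∈ Finset.Icc 1 n, |p i - q i|

lemma flatten_eq_of_mem (p : ℕ → ℝ) (P : Finset (Finset ℕ))
    (hdis : ∀ I ∈ P, ∀ J ∈ P, I ≠ J → Disjoint I J)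
    {I : Finset ℕ} (hI : I ∈ P) {i : ℕ} (hi : i ∈ I) :
    flatten p P i = (∑ j ∈ I, p j) / (I.card : ℝ) := by
  unfold flatten
  rw [Finset.sum_eq_single I]
  · simp [hi]
  · intro J hJ hne
    have : i ∉ J := fun h => Finset.disjoint_left.mp (hdis J hJ I hI hne) h hi
    simp [this]
  · intro h; exact absurd hI h

/-- a refinement of an ε-flat decomposition is 2ε-flat. -/
theorem refinement_flat (n : ℕ) (p : ℕ → ℝ) (ε : ℝ)
    (P Q : Finset (Finset ℕ))
    (hp0 : ∀ i, 0 ≤ p i)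
    (hp1 : ∑ i ∈ Finset.Icc 1 n, p i = 1)
    (hP : IsIntervalPartition n P) (hQ : IsIntervalPartition n Q)
    (href : ∀ J ∈ Q, ∃ I ∈ P, J ⊆ I)
    (hflat : dTV n p (flatten p P) ≤ ε) :
    dTV n p (flatten p Q) ≤ 2 * ε := by
  obtain ⟨hPint, hPdis, hPun⟩ := hP
  obtain ⟨hQint, hQdis, hQun⟩ := hQ
  have hQpd : (Q : Set (Finset ℕ)).PairwiseDisjoint id := by
    intro a ha b hb hab
    exact hQdis a ha b hb hab
  have hsplit : ∀ f : ℕ → ℝ, ∑ i ∈ Finset.Icc 1 n, f i = ∑ J ∈ Q, ∑ i ∈ J, f i := by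
    intro f
    rw [← hQun, Finset.sum_biUnion hQpd]
    rfl
  -- key: dTV(flatP, flatQ) ≤ dTV(p, flatP)
  have key : ∑ i ∈ Finset.Icc 1 n, |flatten p P i - flatten p Q i|
      ≤ ∑ i ∈ Finset.Icc 1 n, |p i - flatten p P i| := by
    rw [hsplit, hsplit]
    apply Finset.sum_le_sum
    intro J hJ
    obtain ⟨I, hI, hJI⟩ := href J hJ
    obtain ⟨a, b, _, hab, _, hJeq⟩ := hQint J hJ
    have hne : J.Nonempty := ⟨a, by rw [hJeq]; exact Finset.mem_Icc.mpr ⟨le_refl a, hab⟩⟩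
    have hcard : (0 : ℝ) < (J.card : ℝ) := by
      exact_mod_cast Finset.card_pos.mpr hne
    set c : ℝ := (∑ j ∈ I, p j) / (I.card : ℝ) with hc
    set s : ℝ := ∑ j ∈ J, p j with hs
    have hfP : ∀ i ∈ J, flatten p P i = c := fun i hi =>
      flatten_eq_of_mem p P hPdis hI (hJI hi)
    have hfQ : ∀ i ∈ J, flatten p Q i = s / (J.card : ℝ) := fun i hi =>
      flatten_eq_of_mem p Q hQdis hJ hi
    calc ∑ i ∈ J, |flatten p P i - flatten p Q i|
        = ∑ i ∈ J, |c - s / (J.card : ℝ)| := by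
          apply Finset.sum_congr rfl
          intro i hi; rw [hfP i hi, hfQ i hi]
      _ = (J.card : ℝ) * |c - s / (J.card : ℝ)| := by
          rw [Finset.sum_const, nsmul_eq_mul]
      _ = |(J.card : ℝ) * c - s| := by
          have h : (J.card : ℝ) * c - s = (J.card : ℝ) * (c - s / (J.card : ℝ)) := by
            field_simp
          rw [h, abs_mul, abs_of_pos hcard]
      _ = |∑ i ∈ J, (c - p i)| := by
          rw [Finset.sum_sub_distrib, Finset.sum_const, nsmul_eq_mul, hs]
      _ ≤ ∑ i ∈ J, |c - p i| := Finset.abs_sum_le_sum_abs _ _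
      _ = ∑ i ∈ J, |p i - flatten p P i| := by
          apply Finset.sum_congr rfl
          intro i hi; rw [hfP i hi, abs_sub_comm]
  -- triangle inequality
  have tri : ∑ i ∈ Finset.Icc 1 n, |p i - flatten p Q i|
      ≤ ∑ i ∈ Finset.Icc 1 n, |p i - flatten p P i|
        + ∑ i ∈ Finset.Icc 1 n, |flatten p P i - flatten p Q i| := by
    rw [← Finset.sum_add_distrib]
    apply Finset.sum_le_sum
    intro i _
    calc |p i - flatten p Q i| = |(p i - flatten p P i) + (flatten p P i - flatten p Q i)| := by
          ring_nf
      _ ≤ _ := abs_add_le _ _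
  unfold dTV at *
  linarith
end

section
/- Let p_1,...,p_k be probability distributions over [n] such that each p_j admits a partition of [n] into at most t intervals whose flattening is within total variation distance ε of p_j. Let p = Σ_j μ_j p_j be a mixture with nonnegative weights summing to 1. Then there exists a partition of [n] into at most k·t intervals whose flattening is within total variation distance 2ε of p. -/
open Finset

/-! ### Auxiliary lemmas -/

lemma flatten_eq {n : ℕ} (p : ℕ → ℝ) {P : Finset (Finset ℕ)} {I : Finset ℕ} {i : ℕ}
    (hP : IsIntervalPartition n P) (hI : I ∈ P) (hi : i ∈ I) :
    flatten p P i = (∑ j ∈ I, p j) / I.card := by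
  unfold flatten
  rw [Finset.sum_eq_single_of_mem I hI]
  · simp [hi]
  · intro J hJ hne
    have : i ∉ J := Finset.disjoint_left.mp (hP.2.1 I hI J hJ (Ne.symm hne)) hi
    simp [this]

lemma part_nonempty {n : ℕ} {P : Finset (Finset ℕ)} (hP : IsIntervalPartition n P)
    {I : Finset ℕ} (hI : I ∈ P) : 0 < I.card := by
  obtain ⟨a, b, h1, hab, hbn, rfl⟩ := hP.1 I hI
  simp [Nat.card_Icc]; omega

lemma pairwise_part {n : ℕ} {P : Finset (Finset ℕ)} (hP : IsIntervalPartition n P) :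
    Set.PairwiseDisjoint (↑P : Set (Finset ℕ)) id := by
  intro I hI J hJ hne
  exact hP.2.1 I hI J hJ hne

/-- flattening is an L¹ contraction -/
lemma flatten_contraction {n : ℕ} {P : Finset (Finset ℕ)} (hP : IsIntervalPartition n P)
    (p q : ℕ → ℝ) :
    ∑ i ∈ Finset.Icc 1 n, |flatten p P i - flatten q P i| ≤
      ∑ i ∈ Finset.Icc 1 n, |p i - q i| := by
  rw [← hP.2.2, Finset.sum_biUnion (pairwise_part hP), Finset.sum_biUnion (pairwise_part hP)]
  apply Finset.sum_le_sum
  intro I hI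
  have hc : 0 < I.card := part_nonempty hP hI
  have hc' : (0:ℝ) < I.card := by exact_mod_cast hc
  calc ∑ i ∈ I, |flatten p P i - flatten q P i|
      = ∑ i ∈ I, |∑ j ∈ I, (p j - q j)| / I.card := by
        refine Finset.sum_congr rfl fun i hi => ?_
        rw [flatten_eq p hP hI hi, flatten_eq q hP hI hi, div_sub_div_same,
          ← Finset.sum_sub_distrib, abs_div, abs_of_pos hc']
    _ = |∑ j ∈ I, (p j - q j)| := by
        rw [Finset.sum_const, nsmul_eq_mul, mul_div_cancel₀ _ (ne_of_gt hc')]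
    _ ≤ ∑ j ∈ I, |p j - q j| := Finset.abs_sum_le_sum_abs _ _

/-- re-flattening over a refinement is the identity on the flattened function -/
lemma flatten_flatten {n : ℕ} {P Q : Finset (Finset ℕ)} (hP : IsIntervalPartition n P)
    (hQ : IsIntervalPartition n Q) (href : ∀ K ∈ Q, ∃ J ∈ P, K ⊆ J)
    (p : ℕ → ℝ) {i : ℕ} (hi : i ∈ Finset.Icc 1 n) :
    flatten (flatten p P) Q i = flatten p P i := by
  rw [← hQ.2.2] at hi
  obtain ⟨K, hK, hiK⟩ := Finset.mem_biUnion.mp hi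
  obtain ⟨J, hJ, hKJ⟩ := href K hK
  have hc : (0:ℝ) < K.card := by exact_mod_cast part_nonempty hQ hK
  rw [flatten_eq (flatten p P) hQ hK hiK, flatten_eq p hP hJ (hKJ hiK)]
  have : ∀ x ∈ K, flatten p P x = (∑ j ∈ J, p j) / J.card :=
    fun x hx => flatten_eq p hP hJ (hKJ hx)
  rw [Finset.sum_congr rfl this, Finset.sum_const, nsmul_eq_mul,
    mul_div_cancel_left₀ _ (ne_of_gt hc)]

/-! ### The common refinement -/

def nxt (n : ℕ) (B : Finset ℕ) (b : ℕ) : ℕ :=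
  (insert (n+1) (B.filter (fun c => b < c))).min' (insert_nonempty _ _)

def partOf (n : ℕ) (B : Finset ℕ) : Finset (Finset ℕ) :=
  B.image (fun b => Finset.Icc b (nxt n B b - 1))

lemma lt_nxt {n : ℕ} {B : Finset ℕ} {b : ℕ} (hb : b ≤ n) : b < nxt n B b := by
  rw [nxt, Finset.lt_min'_iff]
  intro c hc
  rcases Finset.mem_insert.mp hc with h | h
  · omega
  · exact (Finset.mem_filter.mp h).2

lemma nxt_le_succ {n : ℕ} {B : Finset ℕ} {b : ℕ} : nxt n B b ≤ n + 1 :=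
  Finset.min'_le _ _ (Finset.mem_insert_self _ _)

lemma nxt_le {n : ℕ} {B : Finset ℕ} {b c : ℕ} (hc : c ∈ B) (hbc : b < c) :
    nxt n B b ≤ c :=
  Finset.min'_le _ _ (Finset.mem_insert_of_mem (Finset.mem_filter.mpr ⟨hc, hbc⟩))

lemma partOf_isPartition {n : ℕ} {B : Finset ℕ} (hB : B ⊆ Finset.Icc 1 n) (h1 : (1:ℕ) ∈ B) :
    IsIntervalPartition n (partOf n B) := by
  have hmem : ∀ b ∈ B, 1 ≤ b ∧ b ≤ n := by
    intro b hb; have := hB hb; simp [Finset.mem_Icc] at this; exact this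
  refine ⟨?_, ?_, ?_⟩
  · intro I hI
    obtain ⟨b, hb, rfl⟩ := Finset.mem_image.mp hI
    obtain ⟨hb1, hbn⟩ := hmem b hb
    have h2 := lt_nxt (B := B) hbn
    have h3 := nxt_le_succ (n := n) (B := B) (b := b)
    exact ⟨b, nxt n B b - 1, hb1, by omega, by omega, rfl⟩
  · intro I hI J hJ hne
    obtain ⟨b, hb, rfl⟩ := Finset.mem_image.mp hI
    obtain ⟨b', hb', rfl⟩ := Finset.mem_image.mp hJ
    have hne' : b ≠ b' := by rintro rfl; exact hne rfl
    rw [Finset.disjoint_left]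
    intro x hx hx'
    rw [Finset.mem_Icc] at hx hx'
    rcases lt_or_gt_of_ne hne' with h | h
    · have := nxt_le (n := n) hb' h; omega
    · have := nxt_le (n := n) hb h; omega
  · apply Finset.Subset.antisymm
    · intro x hx
      obtain ⟨I, hI, hxI⟩ := Finset.mem_biUnion.mp hx
      obtain ⟨b, hb, rfl⟩ := Finset.mem_image.mp hI
      obtain ⟨hb1, hbn⟩ := hmem b hb
      simp only [id] at hxI
      rw [Finset.mem_Icc] at hxI ⊢
      have h3 := nxt_le_succ (n := n) (B := B) (b := b)
      omega
    · intro i hi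
      rw [Finset.mem_Icc] at hi
      have hne : (B.filter (fun y => y ≤ i)).Nonempty :=
        ⟨1, Finset.mem_filter.mpr ⟨h1, hi.1⟩⟩
      set b := (B.filter (fun y => y ≤ i)).max' hne with hbdef
      have hbmem := (B.filter (fun y => y ≤ i)).max'_mem hne
      rw [Finset.mem_filter] at hbmem
      have hinxt : i < nxt n B b := by
        rw [nxt, Finset.lt_min'_iff]
        intro c hc
        rcases Finset.mem_insert.mp hc with h | h
        · omega
        · rw [Finset.mem_filter] at h
          by_contra hci
          push_neg at hci
          have := Finset.le_max' (B.filter (fun y => y ≤ i)) c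
            (Finset.mem_filter.mpr ⟨h.1, hci⟩)
          omega
      apply Finset.mem_biUnion.mpr
      refine ⟨Finset.Icc b (nxt n B b - 1), Finset.mem_image.mpr ⟨b, hbmem.1, rfl⟩, ?_⟩
      simp only [id, Finset.mem_Icc]
      omega

lemma partOf_refines {n : ℕ} {B : Finset ℕ} {P : Finset (Finset ℕ)}
    (hB : B ⊆ Finset.Icc 1 n)
    (hP : IsIntervalPartition n P)
    (hBP : ∀ I ∈ P, ∀ x ∈ I, x - 1 ∉ I → x ∈ B) :
    ∀ K ∈ partOf n B, ∃ J ∈ P, K ⊆ J := by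
  intro K hK
  obtain ⟨b, hb, rfl⟩ := Finset.mem_image.mp hK
  have hbIcc : b ∈ Finset.Icc 1 n := hB hb
  have hbJ : b ∈ P.biUnion id := hP.2.2 ▸ hbIcc
  obtain ⟨J, hJ, hbJ'⟩ := Finset.mem_biUnion.mp hbJ
  simp only [id] at hbJ'
  obtain ⟨a, c, ha1, hac, hcn, rfl⟩ := hP.1 J hJ
  rw [Finset.mem_Icc] at hbJ'
  refine ⟨Finset.Icc a c, hJ, ?_⟩
  have hkey : nxt n B b ≤ c + 1 := by
    rcases Nat.lt_or_ge c n with hcn' | hcn'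
    · have hc1 : c + 1 ∈ P.biUnion id := by
        rw [hP.2.2, Finset.mem_Icc]; omega
      obtain ⟨J', hJ', hcJ'⟩ := Finset.mem_biUnion.mp hc1
      simp only [id] at hcJ'
      obtain ⟨a', c', ha1', hac', hcn2, rfl⟩ := hP.1 J' hJ'
      rw [Finset.mem_Icc] at hcJ'
      have hne : Finset.Icc a c ≠ Finset.Icc a' c' := by
        intro h
        have : c + 1 ∈ Finset.Icc a c := h ▸ (Finset.mem_Icc.mpr hcJ')
        rw [Finset.mem_Icc] at this; omega
      have hdisj := hP.2.1 _ hJ _ hJ' hne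
      have ha' : a' = c + 1 := by
        by_contra h
        have ha'c : a' ≤ c := by omega
        have : max a a' ∈ Finset.Icc a c ∧ max a a' ∈ Finset.Icc a' c' := by
          constructor <;> rw [Finset.mem_Icc] <;> constructor <;> omega
        exact (Finset.disjoint_left.mp hdisj this.1) this.2
      have hmemB : c + 1 ∈ B := by
        apply hBP _ hJ' (c+1) (Finset.mem_Icc.mpr hcJ')
        rw [Finset.mem_Icc]; omega
      exact nxt_le hmemB (by omega)
    · have := nxt_le_succ (n := n) (B := B) (b := b); omega
  intro x hx
  rw [Finset.mem_Icc] at hx ⊢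
  omega

lemma flatten_linear {k : ℕ} (μ : Fin k → ℝ) (p : Fin k → ℕ → ℝ)
    (Q : Finset (Finset ℕ)) (x : ℕ) :
    flatten (fun i => ∑ j, μ j * p j i) Q x = ∑ j, μ j * flatten (p j) Q x := by
  unfold flatten
  have h : ∀ I ∈ Q, (if x ∈ I then (∑ y ∈ I, ∑ j, μ j * p j y) / I.card else 0)
      = ∑ j, μ j * (if x ∈ I then (∑ y ∈ I, p j y) / I.card else 0) := by
    intro I _
    by_cases h : x ∈ I
    · simp only [h, if_true]
      rw [Finset.sum_comm, Finset.sum_div]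
      refine Finset.sum_congr rfl fun j _ => ?_
      rw [← Finset.mul_sum, mul_div_assoc]
    · simp [h]
  rw [Finset.sum_congr rfl h, Finset.sum_comm]
  refine Finset.sum_congr rfl fun j _ => ?_
  rw [Finset.mul_sum]

/-- a k-mixture of (ε,t)-flat distributions is (2ε, k·t)-flat. -/
theorem mixture_flat (n k t : ℕ) (ε : ℝ) (μ : Fin k → ℝ) (p : Fin k → ℕ → ℝ)
    (hμ0 : ∀ j, 0 ≤ μ j) (hμ1 : ∑ j, μ j = 1)
    (hp0 : ∀ j i, 0 ≤ p j i)
    (hp1 : ∀ j, ∑ i ∈ Finset.Icc 1 n, p j i = 1)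
    (hflat : ∀ j, ∃ P, IsIntervalPartition n P ∧ P.card ≤ t ∧
      dTV n (p j) (flatten (p j) P) ≤ ε) :
    ∃ P, IsIntervalPartition n P ∧ P.card ≤ k * t ∧
      dTV n (fun i => ∑ j, μ j * p j i)
        (flatten (fun i => ∑ j, μ j * p j i) P) ≤ 2 * ε := by
  -- k ≥ 1 and n ≥ 1 or contradiction
  rcases Nat.eq_zero_or_pos k with hk | hk
  · subst hk; simp at hμ1
  have j0 : Fin k := ⟨0, hk⟩
  rcases Nat.eq_zero_or_pos n with hn | hn
  · exfalso; have := hp1 j0; subst hn; simp at this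
  choose Ps hpart hcard hdtv using hflat
  -- the set of all left endpoints
  set B : Finset ℕ :=
    Finset.univ.biUnion (fun j => (Ps j).biUnion (fun I => I.filter (fun x => x - 1 ∉ I)))
    with hBdef
  have hBsub : B ⊆ Finset.Icc 1 n := by
    intro x hx
    rw [hBdef] at hx
    obtain ⟨j, _, hx⟩ := Finset.mem_biUnion.mp hx
    obtain ⟨I, hI, hx⟩ := Finset.mem_biUnion.mp hx
    rw [Finset.mem_filter] at hx
    have : x ∈ (Ps j).biUnion id := Finset.mem_biUnion.mpr ⟨I, hI, hx.1⟩
    rwa [(hpart j).2.2] at this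
  have hBP : ∀ j, ∀ I ∈ Ps j, ∀ x ∈ I, x - 1 ∉ I → x ∈ B := by
    intro j I hI x hx hx'
    rw [hBdef]
    exact Finset.mem_biUnion.mpr ⟨j, Finset.mem_univ _,
      Finset.mem_biUnion.mpr ⟨I, hI, Finset.mem_filter.mpr ⟨hx, hx'⟩⟩⟩
  have h1B : (1:ℕ) ∈ B := by
    have : (1:ℕ) ∈ (Ps j0).biUnion id := by
      rw [(hpart j0).2.2, Finset.mem_Icc]; omega
    obtain ⟨I, hI, h1I⟩ := Finset.mem_biUnion.mp this
    simp only [id] at h1I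
    apply hBP j0 I hI 1 h1I
    obtain ⟨a, b, ha1, hab, hbn, rfl⟩ := (hpart j0).1 I hI
    rw [Finset.mem_Icc]; omega
  -- cardinality of B
  have hBcard : B.card ≤ k * t := by
    calc B.card ≤ ∑ j : Fin k, ((Ps j).biUnion (fun I => I.filter (fun x => x - 1 ∉ I))).card :=
          Finset.card_biUnion_le
      _ ≤ ∑ j : Fin k, t := by
          apply Finset.sum_le_sum
          intro j _
          calc ((Ps j).biUnion (fun I => I.filter (fun x => x - 1 ∉ I))).card
              ≤ ∑ I ∈ Ps j, (I.filter (fun x => x - 1 ∉ I)).card := Finset.card_biUnion_le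
            _ ≤ ∑ I ∈ Ps j, 1 := by
                apply Finset.sum_le_sum
                intro I hI
                obtain ⟨a, b, ha1, hab, hbn, rfl⟩ := (hpart j).1 I hI
                have : (Finset.Icc a b).filter (fun x => x - 1 ∉ Finset.Icc a b) ⊆ {a} := by
                  intro x hx
                  rw [Finset.mem_filter, Finset.mem_Icc] at hx
                  have hx2 : x - 1 ∉ Finset.Icc a b := hx.2
                  rw [Finset.mem_Icc] at hx2
                  rw [Finset.mem_singleton]
                  omega
                calc _ ≤ ({a} : Finset ℕ).card := Finset.card_le_card this
                  _ = 1 := Finset.card_singleton a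
            _ = (Ps j).card := by rw [Finset.sum_const, smul_eq_mul, mul_one]
            _ ≤ t := hcard j
      _ = k * t := by rw [Finset.sum_const, Finset.card_univ, Fintype.card_fin, smul_eq_mul]
  -- the common refinement
  set Q := partOf n B with hQdef
  have hQ : IsIntervalPartition n Q := partOf_isPartition hBsub h1B
  have hQcard : Q.card ≤ k * t := le_trans Finset.card_image_le hBcard
  refine ⟨Q, hQ, hQcard, ?_⟩
  -- per-component bound
  have hperj : ∀ j, ∑ i ∈ Finset.Icc 1 n, |p j i - flatten (p j) Q i| ≤ 4 * ε := by
    intro j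
    have href := partOf_refines hBsub (hpart j) (hBP j)
    have h2 : ∑ i ∈ Finset.Icc 1 n, |flatten (p j) (Ps j) i - flatten (p j) Q i| ≤
        ∑ i ∈ Finset.Icc 1 n, |flatten (p j) (Ps j) i - p j i| := by
      calc ∑ i ∈ Finset.Icc 1 n, |flatten (p j) (Ps j) i - flatten (p j) Q i|
          = ∑ i ∈ Finset.Icc 1 n,
              |flatten (flatten (p j) (Ps j)) Q i - flatten (p j) Q i| := by
            refine Finset.sum_congr rfl fun i hi => ?_
            rw [flatten_flatten (hpart j) hQ href (p j) hi]
        _ ≤ ∑ i ∈ Finset.Icc 1 n, |flatten (p j) (Ps j) i - p j i| :=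
            flatten_contraction hQ _ _
    have h3 : ∑ i ∈ Finset.Icc 1 n, |p j i - flatten (p j) (Ps j) i| ≤ 2 * ε := by
      have := hdtv j
      rw [dTV] at this
      linarith
    have h4 : ∑ i ∈ Finset.Icc 1 n, |flatten (p j) (Ps j) i - p j i| ≤ 2 * ε := by
      calc ∑ i ∈ Finset.Icc 1 n, |flatten (p j) (Ps j) i - p j i|
          = ∑ i ∈ Finset.Icc 1 n, |p j i - flatten (p j) (Ps j) i| := by
            refine Finset.sum_congr rfl fun i _ => ?_
            rw [abs_sub_comm]
        _ ≤ 2 * ε := h3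
    calc ∑ i ∈ Finset.Icc 1 n, |p j i - flatten (p j) Q i|
        ≤ ∑ i ∈ Finset.Icc 1 n,
            (|p j i - flatten (p j) (Ps j) i| + |flatten (p j) (Ps j) i - flatten (p j) Q i|) := by
          apply Finset.sum_le_sum
          intro i _
          exact abs_sub_le _ _ _
      _ = (∑ i ∈ Finset.Icc 1 n, |p j i - flatten (p j) (Ps j) i|)
          + ∑ i ∈ Finset.Icc 1 n, |flatten (p j) (Ps j) i - flatten (p j) Q i| :=
          Finset.sum_add_distrib
      _ ≤ 2 * ε + 2 * ε := add_le_add h3 (le_trans h2 h4)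
      _ = 4 * ε := by ring
  -- assemble the mixture bound
  rw [dTV]
  have hmain : ∑ i ∈ Finset.Icc 1 n,
      |(∑ j, μ j * p j i) - flatten (fun i => ∑ j, μ j * p j i) Q i| ≤ 4 * ε := by
    calc ∑ i ∈ Finset.Icc 1 n,
          |(∑ j, μ j * p j i) - flatten (fun i => ∑ j, μ j * p j i) Q i|
        = ∑ i ∈ Finset.Icc 1 n, |∑ j, μ j * (p j i - flatten (p j) Q i)| := by
          refine Finset.sum_congr rfl fun i _ => ?_
          rw [flatten_linear, ← Finset.sum_sub_distrib]
          congr 1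
          refine Finset.sum_congr rfl fun j _ => ?_
          ring
      _ ≤ ∑ i ∈ Finset.Icc 1 n, ∑ j, |μ j * (p j i - flatten (p j) Q i)| :=
          Finset.sum_le_sum fun i _ => Finset.abs_sum_le_sum_abs _ _
      _ = ∑ j, ∑ i ∈ Finset.Icc 1 n, μ j * |p j i - flatten (p j) Q i| := by
          rw [Finset.sum_comm]
          refine Finset.sum_congr rfl fun j _ => Finset.sum_congr rfl fun i _ => ?_
          rw [abs_mul, abs_of_nonneg (hμ0 j)]
      _ = ∑ j, μ j * ∑ i ∈ Finset.Icc 1 n, |p j i - flatten (p j) Q i| := by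
          refine Finset.sum_congr rfl fun j _ => ?_
          rw [Finset.mul_sum]
      _ ≤ ∑ j, μ j * (4 * ε) :=
          Finset.sum_le_sum fun j _ => mul_le_mul_of_nonneg_left (hperj j) (hμ0 j)
      _ = 4 * ε := by rw [← Finset.sum_mul, hμ1, one_mul]
  linarith
end

section
/- Let p be a distribution over the integers that is log-concave and non-decreasing on [1,b], extended by p(i)=0 for i ≤ 0. Let I = [a,b] with p(I) = τ and J = [1,a−1] with p(J) = σ > 0. Then p(b)/p(a) ≤ 1 + τ/σ. -/
/-!
Log-concavity makes the ratios `p (k + 1) / p k` non-increasing on `[1, b]`, so for `j < a`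
shifting the pair `(j, a)` to `(b - a + j, b)` gives `p j * p b ≤ p a * p (b - a + j)`.
Summing over `j ∈ [1, a - 1]` yields `σ * p b ≤ p a * (σ + τ)`, since the shifted window
`[b - a + 1, b - 1]` lies inside `[1, b]`.
-/

open Finset

section LogConcave

variable {p : ℤ → ℝ} {b : ℤ}

lemma monotoneOn_Icc_of_le_add_one (hmono : ∀ i, 1 ≤ i → i < b → p i ≤ p (i + 1)) :
    MonotoneOn p (Set.Icc 1 b) :=
  monotoneOn_of_le_add_one Set.ordConnected_Icc fun i _ hi hi1 =>
    hmono i hi.1 (Int.lt_of_add_one_le hi1.2)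

variable (hp0 : ∀ i, 0 ≤ p i) (hmono : MonotoneOn p (Set.Icc 1 b))
include hp0 hmono

lemma eq_zero_of_le_of_eq_zero {x m : ℤ} (hx : 1 ≤ x) (hxm : x ≤ m) (hmb : m ≤ b)
    (hm : p m = 0) : p x = 0 :=
  le_antisymm (hm ▸ hmono ⟨hx, hxm.trans hmb⟩ ⟨hx.trans hxm, hmb⟩ hxm) (hp0 x)

variable (hlc : ∀ k ≤ b, p (k - 1) * p (k + 1) ≤ p k ^ 2)
include hlc

lemma mul_le_mul_add_one_of_logConcave {x k : ℤ} (hx : 1 ≤ x) (hxk : x ≤ k)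
    (hkb : k + 1 ≤ b) :
    p x * p (k + 1) ≤ p (x + 1) * p k := by
  induction k, hxk using Int.leInduction with
  | base => rw [mul_comm]
  | succ k hxk ih =>
    rcases (hp0 (k + 1)).eq_or_lt with hk | hk
    · rw [eq_zero_of_le_of_eq_zero hp0 hmono hx (by omega) (by omega) hk.symm, zero_mul]
      exact mul_nonneg (hp0 _) (hp0 _)
    have hlck : p k * p (k + 1 + 1) ≤ p (k + 1) ^ 2 := by
      simpa using hlc (k + 1) (by omega)
    refine le_of_mul_le_mul_right ?_ hk
    calc p x * p (k + 1 + 1) * p (k + 1) = p x * p (k + 1) * p (k + 1 + 1) := by ring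
      _ ≤ p (x + 1) * p k * p (k + 1 + 1) := mul_le_mul_of_nonneg_right (ih (by omega)) (hp0 _)
      _ = p (x + 1) * (p k * p (k + 1 + 1)) := by ring
      _ ≤ p (x + 1) * p (k + 1) ^ 2 := mul_le_mul_of_nonneg_left hlck (hp0 _)
      _ = p (x + 1) * p (k + 1) * p (k + 1) := by ring

lemma mul_le_mul_add_of_logConcave {x y d : ℤ} (hx : 1 ≤ x) (hxy : x ≤ y) (hd : 0 ≤ d)
    (hyd : y + d ≤ b) : p x * p (y + d) ≤ p (x + d) * p y := by
  induction d, hd using Int.leInduction with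
  | base => simp
  | succ d hd ih =>
    rcases (hp0 (y + d)).eq_or_lt with hy | hy
    · rw [eq_zero_of_le_of_eq_zero hp0 hmono hx (by omega) (by omega) hy.symm, zero_mul]
      exact mul_nonneg (hp0 _) (hp0 _)
    have hstep : p (x + d) * p (y + d + 1) ≤ p (x + d + 1) * p (y + d) :=
      mul_le_mul_add_one_of_logConcave hp0 hmono hlc (by omega) (by omega) (by omega)
    refine le_of_mul_le_mul_right ?_ hy
    calc p x * p (y + (d + 1)) * p (y + d) = p x * p (y + d) * p (y + d + 1) := by ring_nf
      _ ≤ p (x + d) * p y * p (y + d + 1) := mul_le_mul_of_nonneg_right (ih (by omega)) (hp0 _)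
      _ = p y * (p (x + d) * p (y + d + 1)) := by ring
      _ ≤ p y * (p (x + d + 1) * p (y + d)) := mul_le_mul_of_nonneg_left hstep (hp0 _)
      _ = p (x + (d + 1)) * p y * p (y + d) := by ring_nf

end LogConcave

lemma sum_Icc_shift_le_sum_add_sum {p : ℤ → ℝ} (hp0 : ∀ i, 0 ≤ p i) {a b : ℤ}
    (hab : a ≤ b) :
    ∑ j ∈ Icc 1 (a - 1), p (b - a + j) ≤
      ∑ i ∈ Icc 1 (a - 1), p i + ∑ i ∈ Icc a b, p i := by
  have hdisj : Disjoint (Icc 1 (a - 1)) (Icc a b) :=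
    disjoint_left.2 fun i hi hi' => by simp only [mem_Icc] at hi hi'; omega
  rw [← sum_union hdisj, ← sum_image fun _ _ _ _ => add_left_cancel]
  refine sum_le_sum_of_subset_of_nonneg (fun i hi => ?_) fun i _ _ => hp0 i
  simp only [mem_image, mem_Icc, mem_union] at hi ⊢
  omega

theorem logconcave_ratio_bound_general (a b : ℤ) (p : ℤ → ℝ)
    (hab : a ≤ b)
    (hp0 : ∀ i, 0 ≤ p i)
    (hmono : ∀ i, 1 ≤ i → i < b → p i ≤ p (i + 1))
    (hlc : ∀ k ≤ b, p (k - 1) * p (k + 1) ≤ p k ^ 2)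
    (hσ : 0 < ∑ i ∈ Finset.Icc 1 (a - 1), p i) :
    p b / p a ≤ 1 + (∑ i ∈ Finset.Icc a b, p i) / (∑ i ∈ Finset.Icc 1 (a - 1), p i) := by
  set σ := ∑ i ∈ Icc 1 (a - 1), p i
  set τ := ∑ i ∈ Icc a b, p i
  have hmono' := monotoneOn_Icc_of_le_add_one hmono
  have hpa : 0 < p a := by
    obtain ⟨j, hj, hpj⟩ := exists_lt_of_sum_lt (s := Icc 1 (a - 1)) (f := 0) (g := p)
      (by simpa using hσ)
    rw [mem_Icc] at hj
    exact hpj.trans_le (hmono' ⟨hj.1, by omega⟩ ⟨by omega, hab⟩ (by omega))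
  have key : σ * p b ≤ p a * (σ + τ) := calc
    σ * p b = ∑ j ∈ Icc 1 (a - 1), p j * p b := sum_mul _ _ _
    _ ≤ ∑ j ∈ Icc 1 (a - 1), p a * p (b - a + j) := sum_le_sum fun j hj => by
      rw [mem_Icc] at hj
      simpa using mul_le_mul_add_of_logConcave hp0 hmono' hlc (x := j) (y := b - a + j)
        (d := a - j) hj.1 (by omega) (by omega) (by omega)
    _ = p a * ∑ j ∈ Icc 1 (a - 1), p (b - a + j) := (mul_sum _ _ _).symm
    _ ≤ p a * (σ + τ) :=
      mul_le_mul_of_nonneg_left (sum_Icc_shift_le_sum_add_sum hp0 hab) (hp0 a)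
  rw [div_le_iff₀ hpa, one_add_div hσ.ne', div_mul_eq_mul_div, le_div_iff₀ hσ]
  linarith

/-- for a non-decreasing log-concave distribution on [1,b] (extended by 0
to non-positive integers), with I = [a,b] of mass τ and J = [1,a−1] of mass σ > 0,
one has p(b)/p(a) ≤ 1 + τ/σ. -/
theorem logconcave_ratio_bound (a b : ℤ) (p : ℤ → ℝ)
    (h1a : 1 ≤ a) (hab : a ≤ b)
    (hp0 : ∀ i, 0 ≤ p i)
    (hzero : ∀ i ≤ (0 : ℤ), p i = 0)
    (hmono : ∀ i, 1 ≤ i → i < b → p i ≤ p (i + 1))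
    (hlc : ∀ k ≤ b, p (k - 1) * p (k + 1) ≤ p k ^ 2)
    (hσ : 0 < ∑ i ∈ Finset.Icc 1 (a - 1), p i) :
    p b / p a ≤ 1 + (∑ i ∈ Finset.Icc a b, p i) / (∑ i ∈ Finset.Icc 1 (a - 1), p i) :=
  logconcave_ratio_bound_general a b p hab hp0 hmono hlc hσ
end

section
/- Let p be a log-concave distribution on [n] (extended by zero outside), non-decreasing on [1,b], with a ≤ b, s = b−a+1, and let λ = p(b)/p(a) ≥ 1 (assuming p(a) > 0). Then for all 1 ≤ i ≤ b, p(i−s) ≤ (1/λ)·p(i). -/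
/-!
Put `u = i - (b - a + 1)`; we may assume `p u > 0`, so `1 ≤ u` and `p b > 0`. Since
`u + b = a + (i - 1)` with `u ≤ a` and `u ≤ i - 1`, log-concavity (the ratio `p (k + 1) / p k`
is non-increasing) gives `p u * p b ≤ p a * p (i - 1)`, and monotonicity gives `p (i - 1) ≤ p i`.
-/

open Set

section LogConcave

variable {p : ℤ → ℝ} {b u x y v : ℤ}

/-- Monotonicity on `[1, b]` stands in for "the support is an interval": a zero of `p` at `x`
forces `p u = 0`, so the ratio argument never divides by zero. -/
lemma mul_add_one_le_add_one_mul_of_logConcave (hp0 : ∀ i, 0 ≤ p i)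
    (hmono : MonotoneOn p (Icc 1 b)) (hlc : ∀ k ≤ b, p (k - 1) * p (k + 1) ≤ p k ^ 2)
    (hu : 1 ≤ u) (hux : u ≤ x) (hxb : x + 1 ≤ b) :
    p u * p (x + 1) ≤ p (u + 1) * p x := by
  induction x, hux using Int.leInduction with
  | base => rw [mul_comm]
  | succ x hux ih =>
    rcases (hp0 x).eq_or_lt with hx | hx
    · have hu0 : p u = 0 :=
        le_antisymm (hx ▸ hmono ⟨hu, by omega⟩ ⟨by omega, by omega⟩ hux) (hp0 u)
      rw [hu0, zero_mul]
      exact mul_nonneg (hp0 _) (hp0 _)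
    have hlcx : p x * p (x + 1 + 1) ≤ p (x + 1) ^ 2 := by
      simpa using hlc (x + 1) (by omega)
    refine le_of_mul_le_mul_left ?_ hx
    calc p x * (p u * p (x + 1 + 1))
        = p u * (p x * p (x + 1 + 1)) := by ring
      _ ≤ p u * p (x + 1) ^ 2 := mul_le_mul_of_nonneg_left hlcx (hp0 u)
      _ = p (x + 1) * (p u * p (x + 1)) := by ring
      _ ≤ p (x + 1) * (p (u + 1) * p x) :=
        mul_le_mul_of_nonneg_left (ih (by omega)) (hp0 _)
      _ = p x * (p (u + 1) * p (x + 1)) := by ring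

lemma mul_le_mul_of_logConcave_of_add_eq (hp0 : ∀ i, 0 ≤ p i)
    (hmono : MonotoneOn p (Icc 1 b)) (hlc : ∀ k ≤ b, p (k - 1) * p (k + 1) ≤ p k ^ 2)
    (hu : 1 ≤ u) (hux : u ≤ x) (huy : u ≤ y) (hsum : x + y = u + v) (hvb : v ≤ b) :
    p u * p v ≤ p x * p y := by
  wlog hxy : x ≤ y generalizing x y
  · rw [mul_comm (p x)]
    exact this huy hux (by omega) (by omega)
  obtain rfl : y = u + v - x := by omega
  clear huy hsum
  induction x, hux using Int.leInduction with
  | base => simp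
  | succ x hux ih =>
    calc p u * p v ≤ p x * p (u + v - x) := ih (by omega)
      _ ≤ p (x + 1) * p (u + v - (x + 1)) := by
        have := mul_add_one_le_add_one_mul_of_logConcave hp0 hmono hlc
          (u := x) (x := u + v - (x + 1)) (by omega) (by omega) (by omega)
        rwa [show u + v - (x + 1) + 1 = u + v - x by ring] at this

end LogConcave

theorem logconcave_geometric_decay_general (a b : ℤ) (p : ℤ → ℝ)
    (hab : a ≤ b)
    (hp0 : ∀ i, 0 ≤ p i)
    (hzero : ∀ i ≤ (0 : ℤ), p i = 0)
    (hmono : ∀ i, 1 ≤ i → i < b → p i ≤ p (i + 1))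
    (hlc : ∀ k ≤ b, p (k - 1) * p (k + 1) ≤ p k ^ 2) :
    ∀ i, 1 ≤ i → i ≤ b → p (i - (b - a + 1)) ≤ (p a / p b) * p i := by
  intro i hi hib
  have hmonoOn : MonotoneOn p (Icc 1 b) :=
    monotoneOn_of_le_add_one ordConnected_Icc fun k _ hk hk1 => hmono k hk.1 (Int.add_one_le_iff.mp hk1.2)
  set u := i - (b - a + 1)
  rcases (hp0 u).eq_or_lt with hu0 | hu0
  · rw [← hu0]
    exact mul_nonneg (div_nonneg (hp0 a) (hp0 b)) (hp0 i)
  have hu : 1 ≤ u := by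
    by_contra! h
    exact hu0.ne' (hzero u (by omega))
  have hpb : 0 < p b := hu0.trans_le (hmonoOn ⟨hu, by omega⟩ ⟨by omega, le_rfl⟩ (by omega))
  rw [div_mul_eq_mul_div, le_div_iff₀ hpb]
  calc p u * p b ≤ p a * p (i - 1) :=
        mul_le_mul_of_logConcave_of_add_eq hp0 hmonoOn hlc hu (by omega) (by omega)
          (by omega) le_rfl
    _ ≤ p a * p i := by
        simpa using mul_le_mul_of_nonneg_left (hmono (i - 1) (by omega) (by omega)) (hp0 a)

/-- for a non-decreasing log-concave distribution on [1,b] (extended by 0),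
with s = b−a+1 and λ = p(b)/p(a) ≥ 1, one has p(i−s) ≤ (1/λ)·p(i) for all 1 ≤ i ≤ b. -/
theorem logconcave_geometric_decay (n a b : ℤ) (p : ℤ → ℝ)
    (h1a : 1 ≤ a) (hab : a ≤ b) (hbn : b ≤ n)
    (hp0 : ∀ i, 0 ≤ p i)
    (hzero : ∀ i ≤ (0 : ℤ), p i = 0)
    (hmono : ∀ i, 1 ≤ i → i < b → p i ≤ p (i + 1))
    (hlc : ∀ k ≤ b, p (k - 1) * p (k + 1) ≤ p k ^ 2)
    (hpa : 0 < p a)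
    (hlam : 1 ≤ p b / p a) :
    ∀ i, 1 ≤ i → i ≤ b → p (i - (b - a + 1)) ≤ (p a / p b) * p i :=
  logconcave_geometric_decay_general a b p hab hp0 hzero hmono hlc
end

section
/- Let p be an MHR distribution over [n]. Let I = [a,b] ⊂ [n] be an interval with b < n, let R = [b+1, n], and suppose p(R) > 0 and set η = p(I)/p(R). Then p(b+1) ≥ p(a)/(1+η). -/
/-- for an MHR distribution p over [n], interval I = [a,b] with b < n,
R = [b+1,n] with p(R) > 0 and η = p(I)/p(R), one has p(b+1) ≥ p(a)/(1+η). -/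
theorem mhr_monotone_lemma (n a b : ℕ) (p : ℕ → ℝ)
    (h1a : 1 ≤ a) (hab : a ≤ b) (hbn : b < n)
    (hp0 : ∀ i, 0 ≤ p i)
    (hp1 : ∑ i ∈ Finset.Icc 1 n, p i = 1)
    (hmhr : ∀ i j, 1 ≤ i → i ≤ j → j ≤ n →
      p i * (∑ k ∈ Finset.Icc j n, p k) ≤ p j * (∑ k ∈ Finset.Icc i n, p k))
    (hR : 0 < ∑ k ∈ Finset.Icc (b + 1) n, p k) :
    p a / (1 + (∑ k ∈ Finset.Icc a b, p k) / (∑ k ∈ Finset.Icc (b + 1) n, p k))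
      ≤ p (b + 1) := by
  set R := ∑ k ∈ Finset.Icc (b + 1) n, p k with hRdef
  set I := ∑ k ∈ Finset.Icc a b, p k with hIdef
  have hsplit : ∑ k ∈ Finset.Icc a n, p k = I + R := by
    have hu : Finset.Icc a n = Finset.Icc a b ∪ Finset.Icc (b + 1) n := by
      ext x
      simp only [Finset.mem_union, Finset.mem_Icc]
      omega
    have hd : Disjoint (Finset.Icc a b) (Finset.Icc (b + 1) n) := by
      rw [Finset.disjoint_left]
      intro x hx hx'
      simp only [Finset.mem_Icc] at hx hx'
      omega
    rw [hu, Finset.sum_union hd]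
  have hI0 : 0 ≤ I := Finset.sum_nonneg fun i _ => hp0 i
  have key := hmhr a (b + 1) h1a (by omega) (by omega)
  rw [hsplit] at key
  have hden : 0 < 1 + I / R := by positivity
  rw [div_le_iff₀ hden]
  have : 1 + I / R = (I + R) / R := by field_simp; ring
  rw [this, ← mul_div_assoc, le_div_iff₀ hR]
  nlinarith [key]
end

section
/- Let q be a probability distribution on [n] and τ > 0. Iteratively applying Right-Interval(q, ·, τ) to peel off intervals from the right of [n] until [n] is exhausted produces a partition of [n] into at most ⌈2/τ⌉ + 1 intervals. -/
/-- Specification of the subroutine Right-Interval(q, [a,b], τ): it returns [i', b]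
where i' = b if q(b) > τ, and otherwise i' is the least a ≤ i ≤ b with q([i,b]) ≤ τ. -/
def RIspec (q : ℕ → ℝ) (a b : ℕ) (τ : ℝ) (i' : ℕ) : Prop :=
  (τ < q b ∧ i' = b) ∨
  (q b ≤ τ ∧ a ≤ i' ∧ i' ≤ b ∧ (∑ j ∈ Finset.Icc i' b, q j) ≤ τ ∧
    ∀ i, a ≤ i → i < i' → τ < ∑ j ∈ Finset.Icc i b, q j)

/-! If Right-Interval returns `[k + 1, b]`, then `[k, b]` has mass `> τ`: either `q b > τ`, or
`k + 1` is the least admissible left endpoint. The point `k` lies in the next removed interval,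
so any two consecutive removed intervals have combined mass `> τ`. Pairing them up gives
`⌊m/2⌋ τ ≤ 1`, hence `m ≤ 2 ⌊m/2⌋ + 1 ≤ ⌈2/τ⌉ + 1`. -/

open Finset

theorem RIspec.lt_sum_Icc {q : ℕ → ℝ} {a b k : ℕ} {τ : ℝ} (hq : ∀ i, 0 ≤ q i)
    (h : RIspec q a b τ (k + 1)) (hak : a ≤ k) : τ < ∑ j ∈ Icc k b, q j := by
  rcases h with ⟨hqb, hb⟩ | ⟨-, -, -, -, hmin⟩
  · have hmem : b ∈ Icc k b := mem_Icc.mpr ⟨by omega, le_rfl⟩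
    exact hqb.trans_le (single_le_sum (fun i _ => hq i) hmem)
  · exact hmin k hak k.lt_succ_self

theorem sum_range_sum_Ioc_add_sum_Ioc_zero {M : Type*} [AddCommMonoid M] (f : ℕ → M)
    {c : ℕ → ℕ} {m : ℕ} (hc : ∀ j < m, c (j + 1) ≤ c j) :
    ∑ j ∈ range m, ∑ i ∈ Ioc (c (j + 1)) (c j), f i + ∑ i ∈ Ioc 0 (c m), f i =
      ∑ i ∈ Ioc 0 (c 0), f i := by
  induction m with
  | zero => simp
  | succ m ih =>
    rw [sum_range_succ, add_assoc, add_comm (∑ i ∈ Ioc (c (m + 1)) (c m), f i),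
      sum_Ioc_consecutive f (Nat.zero_le _) (hc m m.lt_succ_self)]
    exact ih fun j hj => hc j (by omega)

theorem mul_le_sum_range_two_mul {M : ℕ → ℝ} {τ : ℝ} (p : ℕ)
    (h : ∀ k < p, τ ≤ M (2 * k) + M (2 * k + 1)) : p * τ ≤ ∑ j ∈ range (2 * p), M j := by
  induction p with
  | zero => simp
  | succ p ih =>
    rw [Nat.mul_succ, sum_range_succ, sum_range_succ, Nat.cast_succ, add_mul, one_mul, add_assoc]
    exact add_le_add (ih fun k hk => h k (by omega)) (h p p.lt_succ_self)

theorem le_ceil_of_adjacent_sum_ge {M : ℕ → ℝ} {τ : ℝ} {m : ℕ} (hτ : 0 < τ) (hM : ∀ j, 0 ≤ M j)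
    (h : ∀ j, j + 1 < m → τ ≤ M j + M (j + 1)) :
    m ≤ ⌈2 * (∑ j ∈ range m, M j) / τ⌉₊ + 1 := by
  set p := m / 2
  have hpair : p * τ ≤ ∑ j ∈ range m, M j :=
    (mul_le_sum_range_two_mul p fun k hk => h (2 * k) (by omega)).trans
      (sum_le_sum_of_subset_of_nonneg (range_subset_range.mpr (by omega)) fun i _ _ => hM i)
  have hp : ((2 * p : ℕ) : ℝ) ≤ 2 * (∑ j ∈ range m, M j) / τ := by
    rw [le_div_iff₀ hτ]; push_cast; linarith
  have hceil := Nat.cast_le.mp (hp.trans (Nat.le_ceil _))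
  omega

theorem right_interval_decomposition_size_general (n m : ℕ) (q : ℕ → ℝ) (τ : ℝ) (c : ℕ → ℕ)
    (hτ : 0 < τ)
    (hq0 : ∀ i, 0 ≤ q i)
    (hq1 : ∑ i ∈ Finset.Icc 1 n, q i = 1)
    (hc0 : c 0 = n) (hcm : c m = 0)
    (hdec : ∀ j, j < m → c (j + 1) < c j)
    (hstep : ∀ j, j < m → RIspec q 1 (c j) τ (c (j + 1) + 1)) :
    m ≤ ⌈2 / τ⌉₊ + 1 := by
  set M : ℕ → ℝ := fun j => ∑ i ∈ Ioc (c (j + 1)) (c j), q i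
  have hM : ∀ j, 0 ≤ M j := fun j => sum_nonneg fun i _ => hq0 i
  have hadj : ∀ j, j + 1 < m → τ ≤ M j + M (j + 1) := by
    intro j hj
    have hfirst : q (c (j + 1)) ≤ M (j + 1) :=
      single_le_sum (fun i _ => hq0 i) (right_mem_Ioc.mpr (hdec (j + 1) hj))
    have hmass := (hstep j (by omega)).lt_sum_Icc hq0 (Nat.one_le_of_lt (hdec (j + 1) hj))
    rw [Icc_eq_cons_Ioc (hdec j (by omega)).le, sum_cons] at hmass
    linarith
  have htotal : ∑ j ∈ range m, M j = 1 := by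
    have htel := sum_range_sum_Ioc_add_sum_Ioc_zero q fun j hj => (hdec j hj).le
    rwa [hcm, Ioc_self, sum_empty, add_zero, hc0, ← Icc_add_one_left_eq_Ioc, zero_add, hq1] at htel
  simpa only [htotal, mul_one] using le_ceil_of_adjacent_sum_ge hτ hM hadj

/-- iteratively peeling intervals off the right of [n] with
Right-Interval(q, ·, τ) yields a partition of [n] into at most ⌈2/τ⌉ + 1 intervals.
Here c j is the right endpoint remaining after j iterations (c 0 = n, c m = 0), and the
j-th removed interval is [c (j+1) + 1, c j]. -/
theorem right_interval_decomposition_size (n m : ℕ) (q : ℕ → ℝ) (τ : ℝ) (c : ℕ → ℕ)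
    (hn : 1 ≤ n) (hτ : 0 < τ)
    (hq0 : ∀ i, 0 ≤ q i)
    (hq1 : ∑ i ∈ Finset.Icc 1 n, q i = 1)
    (hc0 : c 0 = n) (hcm : c m = 0)
    (hdec : ∀ j, j < m → c (j + 1) < c j)
    (hstep : ∀ j, j < m → RIspec q 1 (c j) τ (c (j + 1) + 1)) :
    m ≤ ⌈2 / τ⌉₊ + 1 :=
  right_interval_decomposition_size_general n m q τ c hτ hq0 hq1 hc0 hcm hdec hstep
end
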